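/- Let a, b ∈ ℝ³ and consider the segment t ↦ a + t·(b − a) for t ∈ [0, 1]. The set of integer lattice cells visited by the segment, namely {(⌊a₁ + t(b₁−a₁)⌋, ⌊a₂ + t(b₂−a₂)⌋, ⌊a₃ + t(b₃−a₃)⌋) : t ∈ [0, 1]}, is finite and has cardinality at most |⌊b₁⌋ − ⌊a₁⌋| + |⌊b₂⌋ − ⌊a₂⌋| + |⌊b₃⌋ − ⌊a₃⌋| + 1. -/

import Mathlib

/-!
Measure progress along the segment by the `ℓ¹` distance of the current cell from the start
cell. Each coordinate of the cell is a monotone or antitone function of the parameter, so the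
cells form an `ℓ¹` geodesic: distances along it add up. Hence distinct cells lie at distinct
distances from the start, all between `0` and the `ℓ¹` distance between the end cells.
-/

open Set

section Geodesic

variable {α ι : Type*} [LinearOrder α] [Fintype ι]

lemma natAbs_sub_add_natAbs_sub_of_monotoneOn_or_antitoneOn {g : α → ℤ} {s : Set α}
    (hg : MonotoneOn g s ∨ AntitoneOn g s) {x t u : α} (hx : x ∈ s) (ht : t ∈ s) (hu : u ∈ s)
    (hxt : x ≤ t) (htu : t ≤ u) :
    (g t - g x).natAbs + (g u - g t).natAbs = (g u - g x).natAbs := by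
  rcases hg with hg | hg
  · have := hg hx ht hxt; have := hg ht hu htu; omega
  · have := hg hx ht hxt; have := hg ht hu htu; omega

variable {g : ι → α → ℤ} {s : Set α}

lemma sum_natAbs_sub_add_sum_natAbs_sub_of_monotoneOn_or_antitoneOn
    (hg : ∀ i, MonotoneOn (g i) s ∨ AntitoneOn (g i) s) {x t u : α}
    (hx : x ∈ s) (ht : t ∈ s) (hu : u ∈ s) (hxt : x ≤ t) (htu : t ≤ u) :
    ∑ i, (g i t - g i x).natAbs + ∑ i, (g i u - g i t).natAbs = ∑ i, (g i u - g i x).natAbs := by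
  rw [← Finset.sum_add_distrib]
  exact Finset.sum_congr rfl fun i _ ↦
    natAbs_sub_add_natAbs_sub_of_monotoneOn_or_antitoneOn (hg i) hx ht hu hxt htu

theorem finite_and_ncard_image_Icc_le_of_monotoneOn_or_antitoneOn {x y : α}
    (hg : ∀ i, MonotoneOn (g i) (Icc x y) ∨ AntitoneOn (g i) (Icc x y)) :
    ((fun t i ↦ g i t) '' Icc x y).Finite ∧
      ((fun t i ↦ g i t) '' Icc x y).ncard ≤ ∑ i, (g i y - g i x).natAbs + 1 := by
  set dist₀ : (ι → ℤ) → ℕ := fun p ↦ ∑ i, (p i - g i x).natAbs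
  have hadd {t u : α} (ht : t ∈ Icc x y) (hu : u ∈ Icc x y) (htu : t ≤ u) :
      dist₀ (fun i ↦ g i t) + ∑ i, (g i u - g i t).natAbs = dist₀ (fun i ↦ g i u) :=
    sum_natAbs_sub_add_sum_natAbs_sub_of_monotoneOn_or_antitoneOn hg
      (left_mem_Icc.2 (ht.1.trans ht.2)) ht hu ht.1 htu
  have hmaps : MapsTo dist₀ ((fun t i ↦ g i t) '' Icc x y) (Iic (∑ i, (g i y - g i x).natAbs)) := by
    rintro _ ⟨t, ht, rfl⟩
    have := hadd ht (right_mem_Icc.2 (ht.1.trans ht.2)) ht.2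
    exact (Nat.le_add_right _ _).trans_eq this
  have hinj : InjOn dist₀ ((fun t i ↦ g i t) '' Icc x y) := by
    suffices ∀ t ∈ Icc x y, ∀ u ∈ Icc x y, t ≤ u →
        dist₀ (fun i ↦ g i t) = dist₀ (fun i ↦ g i u) → (fun i ↦ g i t) = fun i ↦ g i u by
      rintro _ ⟨t, ht, rfl⟩ _ ⟨u, hu, rfl⟩ heq
      rcases le_total t u with htu | hut
      exacts [this t ht u hu htu heq, (this u hu t ht hut heq.symm).symm]
    intro t ht u hu htu heq
    have hzero : ∑ i, (g i u - g i t).natAbs = 0 := by have := hadd ht hu htu; omega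
    funext i
    have := (Finset.sum_eq_zero_iff.1 hzero) i (Finset.mem_univ i)
    omega
  refine ⟨(finite_Iic _).of_injOn hmaps hinj, ?_⟩
  calc ((fun t i ↦ g i t) '' Icc x y).ncard
      ≤ (Iic (∑ i, (g i y - g i x).natAbs)).ncard := ncard_le_ncard_of_injOn dist₀ hmaps hinj
    _ = ∑ i, (g i y - g i x).natAbs + 1 := by
      rw [← Finset.coe_Iic, ncard_coe_finset, Nat.card_Iic]

end Geodesic

lemma monotone_or_antitone_floor_lineMap (a b : ℝ) :
    Monotone (fun t : ℝ ↦ ⌊a + t * (b - a)⌋) ∨ Antitone (fun t : ℝ ↦ ⌊a + t * (b - a)⌋) := by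
  rcases le_total a b with hab | hba
  · exact Or.inl fun t u htu ↦ Int.floor_le_floor (by nlinarith)
  · exact Or.inr fun t u htu ↦ Int.floor_le_floor (by nlinarith)

/-- A line segment in `ℝ³` visits only finitely many unit lattice cells, and their number
is at most the sum of the coordinate-wise floor differences plus one. This underlies the
`O(R/d)` bound on the number of cells traversed by a single ray in ray-casting. -/
theorem segment_visits_few_cells (a b : Fin 3 → ℝ) (S : Set (ℤ × ℤ × ℤ))
    (hS : S = {p | ∃ t ∈ Set.Icc (0 : ℝ) 1,
      p = (⌊a 0 + t * (b 0 - a 0)⌋, ⌊a 1 + t * (b 1 - a 1)⌋, ⌊a 2 + t * (b 2 - a 2)⌋)}) :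
    S.Finite ∧
    S.ncard ≤ (⌊b 0⌋ - ⌊a 0⌋).natAbs + (⌊b 1⌋ - ⌊a 1⌋).natAbs + (⌊b 2⌋ - ⌊a 2⌋).natAbs + 1 := by
  set cells := (fun t i ↦ ⌊a i + t * (b i - a i)⌋) '' Icc (0 : ℝ) 1
  set toTriple : (Fin 3 → ℤ) → ℤ × ℤ × ℤ := fun p ↦ (p 0, p 1, p 2)
  have htoTriple : Function.Injective toTriple := fun p q h ↦ by
    simp only [toTriple, Prod.mk.injEq] at h
    funext i; fin_cases i <;> simp [h]
  have hS' : S = toTriple '' cells := by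
    rw [hS, image_image]; ext p; simp [toTriple, eq_comm]
  obtain ⟨hfin, hcard⟩ := finite_and_ncard_image_Icc_le_of_monotoneOn_or_antitoneOn
    (g := fun i t ↦ ⌊a i + t * (b i - a i)⌋) fun i ↦
      (monotone_or_antitone_floor_lineMap (a i) (b i)).imp (·.monotoneOn _) (·.antitoneOn _)
  rw [hS']
  refine ⟨hfin.image toTriple, ?_⟩
  rw [ncard_image_of_injective _ htoTriple]
  simpa [Fin.sum_univ_three] using hcard
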